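/- Let F : ℝ^N → ℝ be differentiable and strictly increasing in each coordinate (∂F/∂q_i > 0 everywhere), let A₁,…,A_N be nonempty finite sets, and Q_j : A_j → ℝ. Then any a maximizing F(Q₁(a₁),…,Q_N(a_N)) over the product set satisfies Q_j(a_j) = max_{b} Q_j(b) for every j; conversely every coordinatewise-greedy joint action maximizes F. -/
import Mathlib

lemma stmt_12_single (N : ℕ) (F : (Fin N → ℝ) → ℝ) (hF : Differentiable ℝ F)
    (hmono : ∀ q : Fin N → ℝ, ∀ i : Fin N, 0 < fderiv ℝ F q (Pi.single i 1))
    (q : Fin N → ℝ) (i : Fin N) :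
    StrictMono (fun t : ℝ => F (Function.update q i t)) := by
  have hderiv : ∀ t : ℝ, HasDerivAt (fun t : ℝ => F (Function.update q i t))
      (fderiv ℝ F (Function.update q i t) (Pi.single i 1)) t := by
    intro t
    have h1 : HasDerivAt (fun t : ℝ => Function.update q i 0 + t • (Pi.single i 1 : Fin N → ℝ))
        (Pi.single i (1:ℝ)) t := by
      simpa using ((hasDerivAt_id t).smul_const (Pi.single i 1 : Fin N → ℝ)).const_add
        (Function.update q i (0:ℝ))
    have heq : (fun t : ℝ => Function.update q i 0 + t • (Pi.single i 1 : Fin N → ℝ))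
        = fun t : ℝ => Function.update q i t := by
      funext t; funext j
      by_cases h : j = i
      · subst h; simp
      · simp [Function.update_of_ne h, Pi.single_apply, h]
    rw [heq] at h1
    exact (hF.differentiableAt.hasFDerivAt).comp_hasDerivAt t h1
  apply strictMono_of_deriv_pos
  intro t
  rw [(hderiv t).deriv]
  exact hmono _ i

lemma stmt_12_mono (N : ℕ) (F : (Fin N → ℝ) → ℝ) (hF : Differentiable ℝ F)
    (hmono : ∀ q : Fin N → ℝ, ∀ i : Fin N, 0 < fderiv ℝ F q (Pi.single i 1))
    {x y : Fin N → ℝ} (hxy : x ≤ y) : F x ≤ F y := by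
  have key : ∀ s : Finset (Fin N), F x ≤ F (s.piecewise y x) := by
    intro s
    induction s using Finset.induction with
    | empty => simp
    | @insert a s ha ih =>
      rw [Finset.piecewise_insert]
      calc F x ≤ F (s.piecewise y x) := ih
      _ = F (Function.update (s.piecewise y x) a (x a)) := by
          rw [← s.piecewise_eq_of_notMem y x ha, Function.update_eq_self]
      _ ≤ F (Function.update (s.piecewise y x) a (y a)) :=
          (stmt_12_single N F hF hmono _ a).monotone (hxy a)
  simpa using key Finset.univ

theorem stmt_12 (N : ℕ) (F : (Fin N → ℝ) → ℝ) (hF : Differentiable ℝ F)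
    (hmono : ∀ q : Fin N → ℝ, ∀ i : Fin N, 0 < fderiv ℝ F q (Pi.single i 1))
    (A : Fin N → Type*) [∀ j, Fintype (A j)] [∀ j, Nonempty (A j)]
    (Q : ∀ j, A j → ℝ) (a : ∀ j, A j) :
    (∀ b : ∀ j, A j, F (fun j => Q j (b j)) ≤ F (fun j => Q j (a j))) ↔
      ∀ j, ∀ b : A j, Q j b ≤ Q j (a j) := by
  constructor
  · intro hmax j b
    by_contra hlt
    push_neg at hlt
    set b' : ∀ k, A k := Function.update a j b with hb'
    have hfun : (fun k => Q k (b' k)) =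
        Function.update (fun k => Q k (a k)) j (Q j b) := by
      funext k
      by_cases h : k = j
      · subst h; simp [hb']
      · simp [hb', Function.update_of_ne h]
    have hstrict := (stmt_12_single N F hF hmono (fun k => Q k (a k)) j) hlt
    simp only [Function.update_eq_self] at hstrict
    have := hmax b'
    rw [hfun] at this
    exact absurd this (not_le.mpr hstrict)
  · intro hg b
    exact stmt_12_mono N F hF hmono (fun j => hg j (b j))
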